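/- arXiv:1202.3907 — 3 statements merged into one kernel-verified Lean document; each statement's English description precedes it below -/
import Mathlib

section
/- Let k ≥ 2, 1 ≤ j ≤ k and p ∈ [0,1). If x = 0 is the unique fixed point of g_p in [0,1], then the sequence of iterates g_p^{∘n}(p) (g_p applied n times to the initial value p) is nonincreasing and converges to 0 as n → ∞. -/
open scoped Classical

noncomputable section

/-- The bootstrap recursion map `g_p(x) = p·∑_{i=k-j+1}^{k} C(k,i) xⁱ (1-x)^{k-i}`. -/
def g (k j : ℕ) (p x : ℝ) : ℝ :=
  p * ∑ i ∈ Finset.Icc (k - j + 1) k, (Nat.choose k i : ℝ) * x ^ i * (1 - x) ^ (k - i)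

/-! `g k j p` maps `[0, 1]` into itself: its terms are part of the binomial expansion of
`(x + (1 - x)) ^ k`. Since `g k j p 1 ≤ 1`, a point with `g k j p x > x` would give, by the
intermediate value theorem, a fixed point in `[x, 1]`, which must be `0`; so `g k j p x ≤ x` on
`[0, 1]`. The orbit of `p` therefore decreases, and its limit is a fixed point, hence `0`. -/

open Set Filter Topology Function

theorem antitone_iterate_of_le_self {α : Type*} [Preorder α] {f : α → α} {s : Set α}
    (hmaps : MapsTo f s s) (hle : ∀ y ∈ s, f y ≤ y) {x : α} (hx : x ∈ s) :
    Antitone fun n => f^[n] x :=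
  antitone_nat_of_succ_le fun n => by
    rw [iterate_succ_apply']
    exact hle _ (hmaps.iterate n hx)

section UniqueFixedPoint

variable {f : ℝ → ℝ} {a b : ℝ}

theorem apply_le_self_of_forall_isFixedPt_eq (hf : ContinuousOn f (Icc a b)) (hb : f b ≤ b)
    (huniq : ∀ y ∈ Icc a b, IsFixedPt f y → y = a) {x : ℝ} (hx : x ∈ Icc a b) : f x ≤ x := by
  by_contra! hlt
  have hsub : Icc x b ⊆ Icc a b := Icc_subset_Icc_left hx.1
  obtain ⟨c, hc, hfc⟩ := intermediate_value_Icc' hx.2 ((hf.mono hsub).sub continuousOn_id)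
    (show (0 : ℝ) ∈ Icc (f b - b) (f x - x) from ⟨by linarith, by linarith⟩)
  have hca : c = a := huniq c (hsub hc) (sub_eq_zero.mp hfc)
  have hxc : x = c := le_antisymm hc.1 (hca ▸ hx.1)
  rw [hxc] at hlt
  exact hlt.ne' (sub_eq_zero.mp hfc)

theorem antitone_iterate_and_tendsto_of_forall_isFixedPt_eq (hf : ContinuousOn f (Icc a b))
    (hmaps : MapsTo f (Icc a b) (Icc a b)) (huniq : ∀ y ∈ Icc a b, IsFixedPt f y → y = a)
    {x : ℝ} (hx : x ∈ Icc a b) :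
    Antitone (fun n => f^[n] x) ∧ Tendsto (fun n => f^[n] x) atTop (𝓝 a) := by
  have hb : b ∈ Icc a b := right_mem_Icc.mpr (hx.1.trans hx.2)
  have hanti : Antitone fun n => f^[n] x := antitone_iterate_of_le_self hmaps
    (fun y hy => apply_le_self_of_forall_isFixedPt_eq hf (hmaps hb).2 huniq hy) hx
  have horbit : ∀ n, f^[n] x ∈ Icc a b := fun n => hmaps.iterate n hx
  have hlim : Tendsto (fun n => f^[n] x) atTop (𝓝 (⨅ n, f^[n] x)) :=
    tendsto_atTop_ciInf hanti ⟨a, forall_mem_range.mpr fun n => (horbit n).1⟩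
  have hlim_mem : ⨅ n, f^[n] x ∈ Icc a b :=
    isClosed_Icc.mem_of_tendsto hlim (Eventually.of_forall horbit)
  have hlim_within : Tendsto (fun n => f^[n] x) atTop (𝓝[Icc a b] (⨅ n, f^[n] x)) :=
    tendsto_nhdsWithin_iff.mpr ⟨hlim, Eventually.of_forall horbit⟩
  have hfix : IsFixedPt f (⨅ n, f^[n] x) := by
    refine tendsto_nhds_unique ((hf _ hlim_mem).tendsto.comp hlim_within) ?_
    simpa only [comp_def, ← iterate_succ_apply'] using (tendsto_add_atTop_iff_nat 1).mpr hlim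
  exact ⟨hanti, huniq _ hlim_mem hfix ▸ hlim⟩

end UniqueFixedPoint

theorem continuous_g (k j : ℕ) (p : ℝ) : Continuous (g k j p) := by
  unfold g
  fun_prop

theorem sum_choose_mul_pow_mul_pow_mem_Icc {k : ℕ} {s : Finset ℕ} (hs : s ⊆ Finset.range (k + 1))
    {x : ℝ} (hx : x ∈ Icc (0 : ℝ) 1) :
    ∑ i ∈ s, (Nat.choose k i : ℝ) * x ^ i * (1 - x) ^ (k - i) ∈ Icc (0 : ℝ) 1 := by
  have hterm : ∀ i, 0 ≤ (Nat.choose k i : ℝ) * x ^ i * (1 - x) ^ (k - i) := fun i =>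
    mul_nonneg (mul_nonneg (Nat.cast_nonneg _) (pow_nonneg hx.1 _))
      (pow_nonneg (sub_nonneg.mpr hx.2) _)
  refine ⟨Finset.sum_nonneg fun i _ => hterm i, ?_⟩
  calc ∑ i ∈ s, (Nat.choose k i : ℝ) * x ^ i * (1 - x) ^ (k - i)
      ≤ ∑ i ∈ Finset.range (k + 1), (Nat.choose k i : ℝ) * x ^ i * (1 - x) ^ (k - i) :=
        Finset.sum_le_sum_of_subset_of_nonneg hs fun i _ _ => hterm i
    _ = (x + (1 - x)) ^ k := by
        rw [add_pow]
        exact Finset.sum_congr rfl fun i _ => by ring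
    _ = 1 := by simp

theorem mapsTo_g (k j : ℕ) {p : ℝ} (hp : p ∈ Icc (0 : ℝ) 1) :
    MapsTo (g k j p) (Icc 0 1) (Icc 0 1) := fun x hx => by
  have hsum := sum_choose_mul_pow_mul_pow_mem_Icc (s := Finset.Icc (k - j + 1) k)
    (fun i hi => Finset.mem_range_succ_iff.mpr (Finset.mem_Icc.mp hi).2) hx
  exact ⟨mul_nonneg hp.1 hsum.1, mul_le_one₀ hp.2 hsum.1 hsum.2⟩

theorem iterates_antitone_tendsto_zero_general (k j : ℕ) (p : ℝ) (hp : p ∈ Set.Ico (0 : ℝ) 1)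
    (huniq : ∀ x ∈ Set.Icc (0 : ℝ) 1, g k j p x = x → x = 0) :
    Antitone (fun n : ℕ => (g k j p)^[n] p) ∧
    Filter.Tendsto (fun n : ℕ => (g k j p)^[n] p) Filter.atTop (nhds 0) :=
  antitone_iterate_and_tendsto_of_forall_isFixedPt_eq (continuous_g k j p).continuousOn
    (mapsTo_g k j (Ico_subset_Icc_self hp)) huniq (Ico_subset_Icc_self hp)

theorem iterates_antitone_tendsto_zero (k j : ℕ) (p : ℝ) (hk : 2 ≤ k) (hj1 : 1 ≤ j)
    (hjk : j ≤ k) (hp : p ∈ Set.Ico (0 : ℝ) 1)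
    (huniq : ∀ x ∈ Set.Icc (0 : ℝ) 1, g k j p x = x → x = 0) :
    Antitone (fun n : ℕ => (g k j p)^[n] p) ∧
    Filter.Tendsto (fun n : ℕ => (g k j p)^[n] p) Filter.atTop (nhds 0) :=
  iterates_antitone_tendsto_zero_general k j p hp huniq
end
end

section
/- For all integers k ≥ 3 and 2 ≤ j ≤ k-1, at the critical parameter p̃ the map g_{p̃} still possesses a nonzero fixed point: there exists x ∈ (0,1] with g_{p̃}(x) = x. (That is, the bootstrap percolation transition is discontinuous when 2 ≤ j ≤ k-1.) -/
open scoped Classical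

noncomputable section

/-- The critical threshold `p̃`: the supremum of the densities `p ∈ [0,1]` for which
`x = 0` is the unique fixed point of `g_p` in `[0,1]`. -/
def ptilde (k j : ℕ) : ℝ :=
  sSup {p : ℝ | p ∈ Set.Icc (0 : ℝ) 1 ∧ ∀ x ∈ Set.Icc (0 : ℝ) 1, g k j p x = x → x = 0}

/-!
Write `g_p = p * F` with `F(x) = P(Bin(k, x) ≥ k - j + 1)`. For `x ∈ (0, 1]` the point `x` is a
fixed point of `g_p` exactly when `p = x / F x`. Since `k - j + 1 ≥ 2`, `F(x) = O(x²)`, so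
`x / F x → ∞` as `x → 0⁺`; hence `x / F x` attains its minimum `m` on `(0, 1]` and, by the
intermediate value theorem, every value `≥ m`. Thus the densities with no nonzero fixed point form
`[0, m)`, so `p̃ = m`, and the minimiser is a nonzero fixed point of `g_m`.
-/

open Filter Topology Set

section Coercive

variable {f : ℝ → ℝ} {a b : ℝ}

theorem exists_isMinOn_Ioc_of_tendsto_atTop (hab : a < b) (hf : ContinuousOn f (Ioc a b))
    (hlim : Tendsto f (𝓝[>] a) atTop) : ∃ x ∈ Ioc a b, IsMinOn f (Ioc a b) x := by
  obtain ⟨δ, hδ, hfδ⟩ := mem_nhdsGT_iff_exists_Ioo_subset.1 (hlim.eventually_ge_atTop (f b))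
  have hc : a < min δ b := lt_min hδ hab
  obtain ⟨x₀, hx₀, hmin⟩ := isCompact_Icc.exists_isMinOn (nonempty_Icc.2 (min_le_right δ b))
    (hf.mono (Icc_subset_Ioc_iff (min_le_right δ b) |>.2 ⟨hc, le_rfl⟩))
  refine ⟨x₀, ⟨hc.trans_le hx₀.1, hx₀.2⟩, fun x hx => ?_⟩
  rcases lt_or_ge x (min δ b) with hxc | hxc
  · calc f x₀ ≤ f b := hmin ⟨min_le_right δ b, le_rfl⟩
      _ ≤ f x := hfδ ⟨hx.1, hxc.trans_le (min_le_left δ b)⟩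
  · exact hmin ⟨hxc, hx.2⟩

theorem Ici_subset_image_Ioc_of_tendsto_atTop (hab : a < b) (hf : ContinuousOn f (Ioc a b))
    (hlim : Tendsto f (𝓝[>] a) atTop) : Ici (f b) ⊆ f '' Ioc a b := by
  rw [← nhdsWithin_Ioc_eq_nhdsGT hab] at hlim
  have : (𝓝[Ioc a b] a).NeBot := by rw [nhdsWithin_Ioc_eq_nhdsGT hab]; infer_instance
  exact isPreconnected_Ioc.intermediate_value_Ici (l := 𝓝[Ioc a b] a) (right_mem_Ioc.2 hab)
    inf_le_right hf hlim

end Coercive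

section Threshold

variable {F : ℝ → ℝ}

theorem setOf_only_trivial_fixedPoint_eq_Ico (hpos : ∀ x ∈ Ioc (0 : ℝ) 1, 0 < F x)
    (hcont : ContinuousOn (fun x => x / F x) (Ioc 0 1))
    (hlim : Tendsto (fun x => x / F x) (𝓝[>] 0) atTop) (hF1 : F 1 = 1) {x₀ : ℝ}
    (hx₀ : x₀ ∈ Ioc 0 1) (hmin : IsMinOn (fun x => x / F x) (Ioc 0 1) x₀) :
    {p : ℝ | p ∈ Icc 0 1 ∧ ∀ x ∈ Icc 0 1, p * F x = x → x = 0} = Ico 0 (x₀ / F x₀) := by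
  ext p
  constructor
  · rintro ⟨⟨hp0, -⟩, hfix⟩
    refine ⟨hp0, lt_of_not_ge fun hmp => ?_⟩
    obtain ⟨x, hx, hxp⟩ := Ici_subset_image_Ioc_of_tendsto_atTop hx₀.1
      (hcont.mono (Ioc_subset_Ioc_right hx₀.2)) hlim hmp
    have hx1 : x ∈ Ioc 0 1 := ⟨hx.1, hx.2.trans hx₀.2⟩
    exact hx.1.ne' (hfix x (Ioc_subset_Icc_self hx1) ((div_eq_iff (hpos x hx1).ne').1 hxp).symm)
  · rintro ⟨hp0, hpm⟩
    have hm1 : x₀ / F x₀ ≤ 1 := by simpa [hF1] using hmin (right_mem_Ioc.2 one_pos)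
    refine ⟨⟨hp0, hpm.le.trans hm1⟩, fun x hx hfix => by_contra fun hx0 => ?_⟩
    have hx1 : x ∈ Ioc 0 1 := ⟨lt_of_le_of_ne hx.1 (Ne.symm hx0), hx.2⟩
    have hxp : x / F x = p := (div_eq_iff (hpos x hx1).ne').2 hfix.symm
    exact (hmin hx1).not_gt (hxp ▸ hpm)

theorem exists_mul_eq_self_at_sSup (hF : ContinuousOn F (Ioc 0 1))
    (hpos : ∀ x ∈ Ioc (0 : ℝ) 1, 0 < F x) (hlim : Tendsto (fun x => x / F x) (𝓝[>] 0) atTop)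
    (hF1 : F 1 = 1) :
    ∃ x ∈ Ioc (0 : ℝ) 1,
      sSup {p : ℝ | p ∈ Icc 0 1 ∧ ∀ x ∈ Icc 0 1, p * F x = x → x = 0} * F x = x := by
  have hcont : ContinuousOn (fun x => x / F x) (Ioc 0 1) :=
    continuousOn_id.div hF fun x hx => (hpos x hx).ne'
  obtain ⟨x₀, hx₀, hmin⟩ := exists_isMinOn_Ioc_of_tendsto_atTop one_pos hcont hlim
  refine ⟨x₀, hx₀, ?_⟩
  rw [setOf_only_trivial_fixedPoint_eq_Ico hpos hcont hlim hF1 hx₀ hmin,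
    csSup_Ico (div_pos hx₀.1 (hpos x₀ hx₀)), div_mul_cancel₀ _ (hpos x₀ hx₀).ne']

end Threshold

def binomTail (k r : ℕ) (x : ℝ) : ℝ :=
  ∑ i ∈ Finset.Icc r k, (k.choose i : ℝ) * x ^ i * (1 - x) ^ (k - i)

section BinomTail

variable {k r : ℕ} {x : ℝ}

theorem continuous_binomTail : Continuous (binomTail k r) := by
  unfold binomTail
  fun_prop

theorem choose_mul_pow_mul_one_sub_pow_nonneg (hx : x ∈ Icc 0 1) (i : ℕ) :
    0 ≤ (k.choose i : ℝ) * x ^ i * (1 - x) ^ (k - i) :=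
  mul_nonneg (mul_nonneg (Nat.cast_nonneg _) (pow_nonneg hx.1 i)) (pow_nonneg (sub_nonneg.2 hx.2) _)

theorem binomTail_pos (hr : r ≤ k) (hx : x ∈ Ioc 0 1) : 0 < binomTail k r x := by
  refine Finset.sum_pos'
    (fun i _ => choose_mul_pow_mul_one_sub_pow_nonneg (Ioc_subset_Icc_self hx) i)
    ⟨k, Finset.mem_Icc.2 ⟨hr, le_rfl⟩, ?_⟩
  simpa using pow_pos hx.1 k

theorem binomTail_one (hr : r ≤ k) : binomTail k r 1 = 1 := by
  rw [binomTail, Finset.sum_eq_single_of_mem k (Finset.mem_Icc.2 ⟨hr, le_rfl⟩)]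
  · simp
  · intro i hi hik
    have : k - i ≠ 0 := by have := (Finset.mem_Icc.1 hi).2; omega
    simp [this]

theorem binomTail_le_two_pow_mul_pow (hx : x ∈ Icc 0 1) : binomTail k r x ≤ 2 ^ k * x ^ r := by
  calc binomTail k r x ≤ ∑ i ∈ Finset.Icc r k, (k.choose i : ℝ) * x ^ r := by
        refine Finset.sum_le_sum fun i hi => ?_
        have hxi : x ^ i ≤ x ^ r := pow_le_pow_of_le_one hx.1 hx.2 (Finset.mem_Icc.1 hi).1
        have h1x : (1 - x) ^ (k - i) ≤ 1 := pow_le_one₀ (sub_nonneg.2 hx.2) (by linarith [hx.1])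
        refine (mul_le_of_le_one_right
          (mul_nonneg (Nat.cast_nonneg _) (pow_nonneg hx.1 i)) h1x).trans ?_
        gcongr
    _ = (∑ i ∈ Finset.Icc r k, (k.choose i : ℝ)) * x ^ r := (Finset.sum_mul ..).symm
    _ ≤ (∑ i ∈ Finset.range (k + 1), (k.choose i : ℝ)) * x ^ r := by
        gcongr
        · exact pow_nonneg hx.1 r
        · exact fun i hi => Finset.mem_range.2 (Nat.lt_succ_of_le (Finset.mem_Icc.1 hi).2)
    _ = 2 ^ k * x ^ r := by rw [← Nat.cast_sum, Nat.sum_range_choose, Nat.cast_pow, Nat.cast_two]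

theorem tendsto_div_binomTail_atTop (hr2 : 2 ≤ r) (hr : r ≤ k) :
    Tendsto (fun x => x / binomTail k r x) (𝓝[>] 0) atTop := by
  refine tendsto_atTop_mono' _ ?_
    (tendsto_inv_nhdsGT_zero.const_mul_atTop (inv_pos.2 (pow_pos two_pos k)))
  filter_upwards [Ioo_mem_nhdsGT one_pos] with x hx
  have hx' : x ∈ Icc 0 1 := Ioo_subset_Icc_self hx
  calc ((2 : ℝ) ^ k)⁻¹ * x⁻¹ = x / (2 ^ k * x ^ 2) := by field_simp
    _ ≤ x / (2 ^ k * x ^ r) := div_le_div_of_nonneg_left hx.1.le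
        (mul_pos (by positivity) (pow_pos hx.1 r))
        (mul_le_mul_of_nonneg_left (pow_le_pow_of_le_one hx.1.le hx.2.le hr2) (by positivity))
    _ ≤ x / binomTail k r x := div_le_div_of_nonneg_left hx.1.le
        (binomTail_pos hr (Ioo_subset_Ioc_self hx)) (binomTail_le_two_pow_mul_pow hx')

end BinomTail

theorem discontinuous_transition_general (k j : ℕ) (hj : 2 ≤ j) (hjk : j ≤ k - 1) :
    ∃ x ∈ Set.Ioc (0 : ℝ) 1, g k j (ptilde k j) x = x := by
  have hr2 : 2 ≤ k - j + 1 := by omega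
  have hrk : k - j + 1 ≤ k := by omega
  exact exists_mul_eq_self_at_sSup continuous_binomTail.continuousOn
    (fun x hx => binomTail_pos hrk hx) (tendsto_div_binomTail_atTop hr2 hrk) (binomTail_one hrk)

theorem discontinuous_transition (k j : ℕ) (hk : 3 ≤ k) (hj : 2 ≤ j) (hjk : j ≤ k - 1) :
    ∃ x ∈ Set.Ioc (0 : ℝ) 1, g k j (ptilde k j) x = x :=
  discontinuous_transition_general k j hj hjk
end
end

section
/- Let L ≥ 0 and p ∈ (0,1). Let Λ_L = {(a,b) ∈ ℤ² : a ≥ 0, b ≥ 0, a+b ≤ L} and let μ be the Bernoulli(p) product measure on {0,1}^{Λ_L}. Then every f : {0,1}^{Λ_L} → ℝ satisfies Var_μ(f) ≤ ∑_{x ∈ Λ_L} μ( Var_x( μ_{Ĉ_x}(f) ) ), where C_x = {z ∈ Λ_L : z·e₁ ≥ x·e₁ and z·e₂ ≥ x·e₂} is the upper-right quadrant of x intersected with Λ_L, Ĉ_x = C_x \ {x}, μ_{Ĉ_x}(f) is the conditional expectation of f given the coordinates outside Ĉ_x, and Var_x is the conditional variance in the coordinate η_x given all other coordinates. -/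
open scoped Classical

noncomputable section

section Bernoulli

variable {V : Type*} [Fintype V] [DecidableEq V]

/-- Bernoulli(p) product weight of a configuration (`true` = occupied, with probability `p`). -/
def wt (p : ℝ) (η : V → Bool) : ℝ := ∏ x : V, if η x then p else 1 - p

/-- Expectation under the Bernoulli(p) product measure μ. -/
def mean (p : ℝ) (f : (V → Bool) → ℝ) : ℝ := ∑ η : V → Bool, wt p η * f η

/-- Probability of an event under the Bernoulli(p) product measure μ. -/
def probEv (p : ℝ) (E : (V → Bool) → Prop) : ℝ := mean p (fun η => if E η then 1 else 0)

/-- Conditional expectation `μ_A(f)` of `f` given the coordinates outside `A`. -/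
def cexp (p : ℝ) (A : Finset V) (f : (V → Bool) → ℝ) (η : V → Bool) : ℝ :=
  ∑ ζ : V → Bool,
    (∏ x : V, if x ∈ A then (if ζ x then p else 1 - p) else (if ζ x = η x then 1 else 0)) * f ζ

/-- Conditional variance `Var_A(f)` on the coordinates of `A` given the remaining coordinates. -/
def cvar (p : ℝ) (A : Finset V) (f : (V → Bool) → ℝ) (η : V → Bool) : ℝ :=
  cexp p A (fun ζ => f ζ ^ 2) η - (cexp p A f η) ^ 2

/-- Variance `Var_μ(f)` under the Bernoulli(p) product measure. -/
def varTot (p : ℝ) (f : (V → Bool) → ℝ) : ℝ := mean p (fun η => f η ^ 2) - (mean p f) ^ 2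

end Bernoulli

/-- The triangle `Λ_L = {(a,b) ∈ ℤ² : a ≥ 0, b ≥ 0, a + b ≤ L}`. -/
abbrev SiteL (L : ℕ) := {z : Fin (L + 1) × Fin (L + 1) // z.1.val + z.2.val ≤ L}

/-- `y` is the North neighbor `x + e₂` of `x`. -/
def isNorth {L : ℕ} (y x : SiteL L) : Prop :=
  y.1.1.val = x.1.1.val ∧ y.1.2.val = x.1.2.val + 1

/-- `y` is the East neighbor `x + e₁` of `x`. -/
def isEast {L : ℕ} (y x : SiteL L) : Prop :=
  y.1.1.val = x.1.1.val + 1 ∧ y.1.2.val = x.1.2.val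

/-- `C_x`: the upper-right quadrant of `x` intersected with `Λ_L`. -/
def quad {L : ℕ} (x : SiteL L) : Finset (SiteL L) :=
  Finset.univ.filter fun z => x.1.1.val ≤ z.1.1.val ∧ x.1.2.val ≤ z.1.2.val


/-!
With `‖g‖² = μ(g²)`, the variance `‖f‖² - ‖μ_Λ f‖²` telescopes along an enumeration of the sites
into the decrements `‖μ_B f‖² - ‖μ_{B ∪ {x}} f‖² = μ(Var_x(μ_B f))`, `B` the set of sites before
`x`. By Pythagoras (`μ_A f - μ_B f ⊥ μ_B f` for `A ⊆ B`) and because `μ_x` is an `L²(μ)`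
contraction, the decrement only grows when `B` is shrunk to a subset. Enumerating the triangle in
decreasing lexicographic order puts every `Ĉ_x` before `x`.
-/

section Telescope

variable {ι β M : Type*} [DecidableEq ι] [LinearOrder β] [AddCommGroup M]

theorem Finset.sum_sub_insert_filter_key_lt {key : ι → β} (hkey : Function.Injective key)
    (g : Finset ι → M) (s : Finset ι) :
    ∑ x ∈ s, (g (s.filter (key · < key x)) - g (insert x (s.filter (key · < key x))))
      = g ∅ - g s := by
  induction s using Finset.induction_on_max_value key with
  | empty => simp
  | insert a s has hmax ih =>
    have hlt : ∀ x ∈ s, key x < key a := fun x hx =>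
      (hmax x hx).lt_of_ne fun h => has (hkey h ▸ hx)
    have hfilter_a : (insert a s).filter (key · < key a) = s := by
      rw [Finset.filter_insert, if_neg (lt_irrefl _)]
      exact Finset.filter_true_of_mem hlt
    have hfilter_x : ∀ x ∈ s, (insert a s).filter (key · < key x) = s.filter (key · < key x) :=
      fun x hx => by rw [Finset.filter_insert, if_neg (hlt x hx).not_gt]
    rw [Finset.sum_insert has, hfilter_a, Finset.sum_congr rfl fun x hx => by rw [hfilter_x x hx],
      ih]
    abel

end Telescope

section BernoulliCalculus

variable {V : Type*} [Fintype V] [DecidableEq V] (p : ℝ)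

def bernWt (p : ℝ) (b : Bool) : ℝ := if b then p else 1 - p

def cexpKernel (A : Finset V) (η ζ : V → Bool) : ℝ :=
  ∏ x, if x ∈ A then bernWt p (ζ x) else if ζ x = η x then 1 else 0

theorem cexp_eq_sum_cexpKernel (A : Finset V) (f : (V → Bool) → ℝ) (η : V → Bool) :
    cexp p A f η = ∑ ζ, cexpKernel p A η ζ * f ζ := rfl

theorem sum_cexpKernel (A : Finset V) (η : V → Bool) : ∑ ζ, cexpKernel p A η ζ = 1 := by
  simp only [cexpKernel]
  rw [← Fintype.prod_sum
    (fun x b => if x ∈ A then bernWt p b else if b = η x then 1 else 0)]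
  refine Finset.prod_eq_one fun x _ => ?_
  by_cases hA : x ∈ A <;> cases η x <;> simp [hA, bernWt]

/-- Detailed balance: `μ` is reversible for every resampling kernel. -/
theorem wt_mul_cexpKernel_comm (A : Finset V) (η ζ : V → Bool) :
    wt p η * cexpKernel p A η ζ = wt p ζ * cexpKernel p A ζ η := by
  simp only [wt, cexpKernel, bernWt, ← Finset.prod_mul_distrib]
  refine Finset.prod_congr rfl fun x _ => ?_
  by_cases hA : x ∈ A <;> cases η x <;> cases ζ x <;> simp [hA] <;> ring

theorem sum_cexpKernel_mul_cexpKernel (A B : Finset V) (η ξ : V → Bool) :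
    ∑ ζ, cexpKernel p A η ζ * cexpKernel p B ζ ξ = cexpKernel p (A ∪ B) η ξ := by
  simp only [cexpKernel, ← Finset.prod_mul_distrib]
  rw [← Fintype.prod_sum (fun x b => (if x ∈ A then bernWt p b else if b = η x then 1 else 0) *
    (if x ∈ B then bernWt p (ξ x) else if ξ x = b then 1 else 0))]
  refine Finset.prod_congr rfl fun x _ => ?_
  by_cases hA : x ∈ A <;> by_cases hB : x ∈ B <;> cases ξ x <;> cases η x <;>
    simp [hA, hB, bernWt] <;> ring

theorem cexp_cexp (A B : Finset V) (f : (V → Bool) → ℝ) :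
    cexp p A (cexp p B f) = cexp p (A ∪ B) f := by
  funext η
  simp only [cexp_eq_sum_cexpKernel, Finset.mul_sum, ← sum_cexpKernel_mul_cexpKernel,
    Finset.sum_mul]
  rw [Finset.sum_comm]
  exact Finset.sum_congr rfl fun _ _ => Finset.sum_congr rfl fun _ _ => by ring

theorem cexp_cexp_of_subset {A B : Finset V} (hAB : A ⊆ B) (f : (V → Bool) → ℝ) :
    cexp p B (cexp p A f) = cexp p B f := by
  rw [cexp_cexp, Finset.union_eq_left.mpr hAB]

theorem cexp_empty (f : (V → Bool) → ℝ) : cexp p ∅ f = f := by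
  funext η
  rw [cexp_eq_sum_cexpKernel, Finset.sum_eq_single η]
  · simp [cexpKernel]
  · intro ζ _ hζ
    obtain ⟨x, hx⟩ := Function.ne_iff.mp hζ
    rw [cexpKernel, Finset.prod_eq_zero (Finset.mem_univ x) (by simp [hx]), zero_mul]
  · simp

theorem cexp_univ (f : (V → Bool) → ℝ) (η : V → Bool) : cexp p Finset.univ f η = mean p f := by
  simp [cexp, mean, wt]

theorem cexp_const (A : Finset V) (c : ℝ) (η : V → Bool) : cexp p A (fun _ => c) η = c := by
  rw [cexp_eq_sum_cexpKernel, ← Finset.sum_mul, sum_cexpKernel, one_mul]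

theorem cexp_sub (A : Finset V) (u v : (V → Bool) → ℝ) (η : V → Bool) :
    cexp p A (fun ζ => u ζ - v ζ) η = cexp p A u η - cexp p A v η := by
  simp only [cexp_eq_sum_cexpKernel, mul_sub, Finset.sum_sub_distrib]

theorem mean_const (c : ℝ) : mean p (fun _ : V → Bool => c) = c := by
  rw [← cexp_univ p _ fun _ => true, cexp_const]

theorem mean_sub (u v : (V → Bool) → ℝ) :
    mean p (fun η => u η - v η) = mean p u - mean p v := by
  simp only [mean, mul_sub, Finset.sum_sub_distrib]

theorem mean_nonneg {p : ℝ} (hp0 : 0 ≤ p) (hp1 : p ≤ 1) {u : (V → Bool) → ℝ}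
    (hu : ∀ η, 0 ≤ u η) : 0 ≤ mean p u :=
  Finset.sum_nonneg fun η _ => mul_nonneg
    (Finset.prod_nonneg fun x _ => by cases η x <;> simp <;> linarith) (hu η)

/-- `cexp p A` is self-adjoint in `L²(μ)`. -/
theorem mean_mul_cexp (A : Finset V) (u v : (V → Bool) → ℝ) :
    mean p (fun η => u η * cexp p A v η) = mean p (fun η => cexp p A u η * v η) := by
  simp only [mean, cexp_eq_sum_cexpKernel, Finset.mul_sum, Finset.sum_mul]
  conv_rhs => rw [Finset.sum_comm]
  refine Finset.sum_congr rfl fun η _ => Finset.sum_congr rfl fun ζ _ => ?_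
  linear_combination (u η * v ζ) * wt_mul_cexpKernel_comm p A η ζ

theorem mean_cexp (A : Finset V) (u : (V → Bool) → ℝ) : mean p (cexp p A u) = mean p u := by
  simpa [cexp_const] using mean_mul_cexp p A (fun _ => 1) u

theorem mean_sq_sub_of_mean_mul_sub_eq_zero {u v : (V → Bool) → ℝ}
    (h : mean p (fun η => v η * (u η - v η)) = 0) :
    mean p (fun η => (u η - v η) ^ 2) = mean p (fun η => u η ^ 2) - mean p (fun η => v η ^ 2) := by
  rw [← mean_sub, ← sub_eq_zero, ← mean_sub]
  calc mean p (fun η => (u η - v η) ^ 2 - (u η ^ 2 - v η ^ 2))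
      = mean p (fun η => -2 * (v η * (u η - v η))) := by congr 1; funext η; ring
    _ = -2 * mean p (fun η => v η * (u η - v η)) := by simp only [mean, Finset.mul_sum]; ring_nf
    _ = 0 := by rw [h, mul_zero]

/-- `‖μ_A f‖²` in `L²(μ)`. -/
def cexpNormSq (A : Finset V) (f : (V → Bool) → ℝ) : ℝ := mean p (fun η => cexp p A f η ^ 2)

theorem varTot_eq_cexpNormSq_empty_sub_univ (f : (V → Bool) → ℝ) :
    varTot p f = cexpNormSq p ∅ f - cexpNormSq p Finset.univ f := by
  simp only [varTot, cexpNormSq, cexp_empty, cexp_univ, mean_const]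

theorem mean_sq_cexp_sub_cexp {A B : Finset V} (hAB : A ⊆ B) (f : (V → Bool) → ℝ) :
    mean p (fun η => (cexp p A f η - cexp p B f η) ^ 2) = cexpNormSq p A f - cexpNormSq p B f := by
  refine mean_sq_sub_of_mean_mul_sub_eq_zero p ?_
  rw [← mean_mul_cexp]
  simp [cexp_sub, cexp_cexp_of_subset p hAB, cexp_cexp_of_subset p (subset_refl B), mean_const]

theorem cexpNormSq_le {p : ℝ} (hp0 : 0 ≤ p) (hp1 : p ≤ 1) (A : Finset V)
    (u : (V → Bool) → ℝ) : cexpNormSq p A u ≤ mean p (fun η => u η ^ 2) := by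
  have h := mean_sq_cexp_sub_cexp p (Finset.empty_subset A) u
  rw [cexpNormSq, cexp_empty] at h
  linarith [mean_nonneg hp0 hp1 fun η => sq_nonneg (u η - cexp p A u η)]

theorem cexpNormSq_sub_insert_le {p : ℝ} (hp0 : 0 ≤ p) (hp1 : p ≤ 1) {A B : Finset V}
    (hAB : A ⊆ B) (x : V) (f : (V → Bool) → ℝ) :
    cexpNormSq p B f - cexpNormSq p (insert x B) f
      ≤ cexpNormSq p A f - cexpNormSq p (insert x A) f := by
  have hdiff := mean_sq_cexp_sub_cexp p hAB f
  have hdiff_x := mean_sq_cexp_sub_cexp p (Finset.insert_subset_insert x hAB) f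
  have hcexp_x : ∀ C : Finset V, cexp p (insert x C) f = cexp p {x} (cexp p C f) := fun C => by
    rw [cexp_cexp, Finset.insert_eq]
  simp only [hcexp_x, ← cexp_sub] at hdiff_x
  have hcontract := cexpNormSq_le hp0 hp1 {x} fun η => cexp p A f η - cexp p B f η
  rw [cexpNormSq] at hcontract
  linarith

theorem mean_cvar_cexp (A B : Finset V) (f : (V → Bool) → ℝ) :
    mean p (cvar p A (cexp p B f)) = cexpNormSq p B f - cexpNormSq p (A ∪ B) f := by
  rw [show cvar p A (cexp p B f) = fun η => cexp p A (fun ζ => cexp p B f ζ ^ 2) η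
      - cexp p A (cexp p B f) η ^ 2 from rfl, mean_sub, mean_cexp, cexp_cexp]
  rfl

theorem varTot_le_sum_mean_cvar {β : Type*} [LinearOrder β] {p : ℝ} (hp0 : 0 ≤ p) (hp1 : p ≤ 1)
    {key : V → β} (hkey : Function.Injective key) {B : V → Finset V}
    (hB : ∀ x, B x ⊆ Finset.univ.filter (key · < key x)) (f : (V → Bool) → ℝ) :
    varTot p f ≤ ∑ x, mean p (cvar p {x} (cexp p (B x) f)) := by
  rw [varTot_eq_cexpNormSq_empty_sub_univ,
    ← Finset.sum_sub_insert_filter_key_lt hkey (cexpNormSq p · f)]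
  refine Finset.sum_le_sum fun x _ => ?_
  rw [mean_cvar_cexp, ← Finset.insert_eq]
  exact cexpNormSq_sub_insert_le hp0 hp1 (hB x) x f

end BernoulliCalculus

theorem lt_of_mem_quad_erase {L : ℕ} {x z : SiteL L} (hz : z ∈ (quad x).erase x) : x.1 < z.1 := by
  obtain ⟨hzx, hzq⟩ := Finset.mem_erase.mp hz
  obtain ⟨h1, h2⟩ := (Finset.mem_filter.mp hzq).2
  exact lt_of_le_of_ne ⟨h1, h2⟩ fun h => hzx (Subtype.ext h).symm

theorem triangle_variance_decomposition (L : ℕ) (p : ℝ) (hp : p ∈ Set.Ioo (0 : ℝ) 1)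
    (f : (SiteL L → Bool) → ℝ) :
    varTot p f ≤ ∑ x : SiteL L, mean p (cvar p {x} (cexp p ((quad x).erase x) f)) := by
  let key : SiteL L → (Lex (Fin (L + 1) × Fin (L + 1)))ᵒᵈ := fun x => OrderDual.toDual (toLex x.1)
  have hkey : Function.Injective key :=
    OrderDual.toDual.injective.comp (toLex.injective.comp Subtype.val_injective)
  refine varTot_le_sum_mean_cvar hp.1.le hp.2.le hkey (fun x z hz => ?_) f
  exact Finset.mem_filter.mpr ⟨Finset.mem_univ z, Prod.Lex.toLex_strictMono (lt_of_mem_quad_erase hz)⟩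
end
end
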